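/- arXiv:1407.1169 — 2 statements merged into one kernel-verified Lean document; each statement's English description precedes it below -/
import Mathlib

section
/- Fix an integer N ≥ 1. The average over the unimodular ensemble of Tr ρ(φ)³ equals (5N² − 6N + 2)/N⁴; that is, (1/(2π)^{N²}) ∫_{[0,2π]^{N²}} Tr(ρ(φ)³) dφ = (5N² − 6N + 2)/N⁴. -/
open Matrix MeasureTheory

/-- The unimodular matrix with phases `φ`: entries `exp(i φ_{jk})`. -/
noncomputable def uniMat (N : ℕ) (φ : Fin N × Fin N → ℝ) : Matrix (Fin N) (Fin N) ℂ :=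
  Matrix.of fun j k => Complex.exp (Complex.I * (φ (j, k) : ℂ))

/-- The random-phase density matrix `ρ(φ) = A(φ) A(φ)ᴴ / N²`. -/
noncomputable def uniRho (N : ℕ) (φ : Fin N × Fin N → ℝ) : Matrix (Fin N) (Fin N) ℂ :=
  ((N : ℂ) ^ 2)⁻¹ • (uniMat N φ * (uniMat N φ)ᴴ)

/-!
Expanding the trace, `Tr (A Aᴴ)³` is a sum of `N⁶` monomials, each a product of three entries
of `A` and three conjugated entries. For unimodular `A` such a monomial is `exp (i ⟨n, φ⟩)` for an
integer vector `n` counting entries minus conjugated entries at each position, so its average over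
the torus is `1` if the two multisets of positions agree and `0` otherwise. The multisets agree
exactly when all three rows coincide, all three columns coincide, or a pair of rows and the
matching pair of columns coincide; counting these index tuples gives `5N⁴ - 6N³ + 2N²`.
-/

open Complex Finset Real

theorem Multiset.prod_map_eq_prod_pow_count {ι M : Type*} [Fintype ι] [DecidableEq ι]
    [CommMonoid M] (s : Multiset ι) (f : ι → M) : (s.map f).prod = ∏ i, f i ^ s.count i := by
  rw [Finset.prod_multiset_map_count]
  exact prod_subset (subset_univ _) fun i _ hi => by
    rw [Multiset.count_eq_zero.mpr (by simpa using hi), pow_zero]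

theorem ite_zero_left_eq_sub {R : Type*} [AddGroup R] (p : Prop) [Decidable p] (x : R) :
    (if p then 0 else x) = x - if p then x else 0 := by
  split_ifs <;> simp

section Torus

variable {ι : Type*} [Fintype ι]

theorem integral_Icc_exp_int_mul_I (m : ℤ) :
    ∫ x in Set.Icc 0 (2 * π), exp (m * (I * x)) = if m = 0 then (2 * π : ℂ) else 0 := by
  rw [integral_Icc_eq_integral_Ioc, ← intervalIntegral.integral_of_le (by positivity)]
  split_ifs with hm
  · simp [hm]
  · have hc : (m : ℂ) * I ≠ 0 := by simp [hm]
    have hperiod : (m : ℂ) * I * ↑(2 * π) = m * (2 * π * I) := by push_cast; ring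
    simp_rw [← mul_assoc]
    rw [integral_exp_mul_complex hc, hperiod, exp_int_mul_two_pi_mul_I]
    simp

theorem setIntegral_univ_pi_prod {𝕜 E : Type*} [RCLike 𝕜] [MeasureSpace E]
    [SigmaFinite (volume : Measure E)] (s : ι → Set E) (f : ι → E → 𝕜) :
    ∫ x in Set.univ.pi s, ∏ i, f i (x i) = ∏ i, ∫ y in s i, f i y := by
  rw [volume_pi, Measure.restrict_pi_pi, integral_fintype_prod_eq_prod]

theorem star_exp_I_mul_ofReal (x : ℝ) : star (exp (I * x)) = (exp (I * x))⁻¹ := by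
  rw [← Complex.exp_neg, star_def, ← exp_conj]
  simp

noncomputable def phaseMonomial (P Q : Multiset ι) (φ : ι → ℝ) : ℂ :=
  (P.map fun v => exp (I * φ v)).prod * (Q.map fun v => star (exp (I * φ v))).prod

variable [DecidableEq ι]

theorem phaseMonomial_eq_prod (P Q : Multiset ι) (φ : ι → ℝ) :
    phaseMonomial P Q φ = ∏ v, exp (((P.count v : ℤ) - Q.count v : ℤ) * (I * φ v)) := by
  simp only [phaseMonomial, Multiset.prod_map_eq_prod_pow_count, star_exp_I_mul_ofReal,
    ← prod_mul_distrib, exp_int_mul, zpow_sub₀ (Complex.exp_ne_zero _), zpow_natCast, inv_pow,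
    div_eq_mul_inv]

theorem integrableOn_phaseMonomial (P Q : Multiset ι) :
    IntegrableOn (phaseMonomial P Q) (Set.univ.pi fun _ : ι => Set.Icc 0 (2 * π)) := by
  have hcont : Continuous (phaseMonomial P Q) := by
    simp_rw [funext (phaseMonomial_eq_prod P Q)]
    fun_prop
  exact hcont.continuousOn.integrableOn_compact (isCompact_univ_pi fun _ => isCompact_Icc)

theorem integral_phaseMonomial (P Q : Multiset ι) :
    ∫ φ in Set.univ.pi (fun _ : ι => Set.Icc 0 (2 * π)), phaseMonomial P Q φ =
      if P = Q then (2 * π : ℂ) ^ Fintype.card ι else 0 := by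
  simp only [phaseMonomial_eq_prod]
  rw [setIntegral_univ_pi_prod _ fun v (y : ℝ) => exp (((P.count v : ℤ) - Q.count v : ℤ) * (I * y))]
  simp only [integral_Icc_exp_int_mul_I, Fintype.prod_ite_zero, prod_const, card_univ,
    sub_eq_zero, Nat.cast_inj, ← Multiset.ext]

end Torus

section TraceCube

variable {m n : Type*}

def cubeEntries : (m × m × m) × (n × n × n) → Multiset (m × n)
  | ((a, b, c), (k₁, k₂, k₃)) => {(a, k₁), (b, k₂), (c, k₃)}

def cubeConjEntries : (m × m × m) × (n × n × n) → Multiset (m × n)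
  | ((a, b, c), (k₁, k₂, k₃)) => {(b, k₁), (c, k₂), (a, k₃)}

theorem Matrix.trace_pow_three {R : Type*} [CommSemiring R] [Fintype m] [DecidableEq m]
    (M : Matrix m m R) : trace (M ^ 3) = ∑ a, ∑ b, ∑ c, M a b * M b c * M c a := by
  simp only [pow_three, trace, diag_apply, mul_apply, mul_sum, mul_assoc]

theorem trace_mul_conjTranspose_pow_three {R : Type*} [CommSemiring R] [StarRing R]
    [Fintype m] [DecidableEq m] [Fintype n] (A : Matrix m n R) :
    trace ((A * Aᴴ) ^ 3) = ∑ x, ((cubeEntries x).map fun v => A v.1 v.2).prod *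
      ((cubeConjEntries x).map fun v => star (A v.1 v.2)).prod := by
  simp only [trace_pow_three, mul_assoc]
  simp only [mul_apply, conjTranspose_apply, sum_mul_sum]
  simp only [mul_sum, Fintype.sum_prod_type, cubeEntries, cubeConjEntries,
    Multiset.insert_eq_cons, Multiset.map_cons, Multiset.prod_cons, Multiset.map_singleton,
    Multiset.prod_singleton]
  ac_rfl

variable [DecidableEq m] [DecidableEq n]

theorem cubeEntries_eq_cubeConjEntries_iff (a b c : m) (k₁ k₂ k₃ : n) :
    cubeEntries ((a, b, c), (k₁, k₂, k₃)) = cubeConjEntries ((a, b, c), (k₁, k₂, k₃)) ↔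
      a = b ∧ b = c ∨ k₁ = k₂ ∧ k₂ = k₃ ∨ a = c ∧ k₁ = k₂ ∨ b = c ∧ k₁ = k₃ ∨
        a = b ∧ k₂ = k₃ := by
  simp only [cubeEntries, cubeConjEntries, Multiset.ext, Multiset.insert_eq_cons,
    Multiset.count_cons, Multiset.count_singleton]
  constructor
  · intro h
    have h1 := h (a, k₁); have h2 := h (b, k₂); have h3 := h (c, k₃)
    have h4 := h (b, k₁); have h5 := h (c, k₂); have h6 := h (a, k₃)
    simp only [Prod.mk.injEq] at h1 h2 h3 h4 h5 h6
    grind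
  · rintro (⟨rfl, rfl⟩ | ⟨rfl, rfl⟩ | ⟨rfl, rfl⟩ | ⟨rfl, rfl⟩ | ⟨rfl, rfl⟩) v <;> grind

theorem card_cubeEntries_eq_cubeConjEntries {R : Type*} [CommRing R] [Fintype m] [Fintype n] :
    (#{x : (m × m × m) × (n × n × n) | cubeEntries x = cubeConjEntries x} : R) =
      Fintype.card m * Fintype.card n ^ 3 +
        3 * Fintype.card m * (Fintype.card m - 1) * Fintype.card n ^ 2 +
        Fintype.card m * (Fintype.card m - 1) * (Fintype.card m - 2) * Fintype.card n := by
  have hsplit : ∀ (a b c : m) (k₁ k₂ k₃ : n),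
      (if cubeEntries ((a, b, c), (k₁, k₂, k₃)) = cubeConjEntries ((a, b, c), (k₁, k₂, k₃))
        then (1 : R) else 0) =
      (if a = b ∧ b = c then 1 else 0) + (if a = b ∧ b ≠ c ∧ k₂ = k₃ then 1 else 0) +
        (if a ≠ b ∧ a = c ∧ k₁ = k₂ then 1 else 0) + (if a ≠ b ∧ b = c ∧ k₁ = k₃ then 1 else 0) +
        (if a ≠ b ∧ a ≠ c ∧ b ≠ c ∧ k₁ = k₂ ∧ k₂ = k₃ then 1 else 0) := by
    intro a b c k₁ k₂ k₃
    simp only [cubeEntries_eq_cubeConjEntries_iff]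
    split_ifs <;> grind
  rw [natCast_card_filter]
  simp only [Fintype.sum_prod_type]
  simp only [hsplit, sum_add_distrib]
  simp only [ite_and, ne_eq, ite_not, ite_zero_left_eq_sub, sum_sub_distrib, sum_ite_irrel,
    sum_const, card_univ, nsmul_eq_mul, mul_one, mul_zero, sum_ite_eq, sum_ite_eq', mem_univ,
    ↓reduceIte, mul_sub, sub_self, sub_zero]
  ring

end TraceCube

theorem trace_uniRho_pow_three (N : ℕ) (φ : Fin N × Fin N → ℝ) :
    trace (uniRho N φ ^ 3) = ((N : ℂ) ^ 2)⁻¹ ^ 3 *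
      ∑ x, phaseMonomial (cubeEntries x) (cubeConjEntries x) φ := by
  rw [uniRho, smul_pow, trace_smul, trace_mul_conjTranspose_pow_three, smul_eq_mul]
  rfl

theorem avg_third_moment_unimodular_general (N : ℕ) :
    ((2 * Real.pi : ℂ) ^ (N ^ 2))⁻¹ *
        ∫ φ in Set.univ.pi fun _ : Fin N × Fin N => Set.Icc (0 : ℝ) (2 * Real.pi),
          Matrix.trace (uniRho N φ ^ 3) =
      (5 * N ^ 2 - 6 * N + 2) / (N : ℂ) ^ 4 := by
  simp only [trace_uniRho_pow_three]
  rw [integral_const_mul, integral_finsetSum _ fun x _ => integrableOn_phaseMonomial _ _]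
  simp only [integral_phaseMonomial, sum_ite, sum_const_zero, add_zero, sum_const, nsmul_eq_mul]
  rw [card_cubeEntries_eq_cubeConjEntries, Fintype.card_prod, Fintype.card_fin, ← sq]
  rcases eq_or_ne N 0 with rfl | hN
  · simp
  · have hπ : (2 * π : ℂ) ≠ 0 := by simp [pi_ne_zero]
    field_simp
    ring

/-- the average `⟨Tr ρ³⟩` over the unimodular ensemble equals `(5N² − 6N + 2)/N⁴`. -/
theorem avg_third_moment_unimodular (N : ℕ) (hN : 1 ≤ N) :
    ((2 * Real.pi : ℂ) ^ (N ^ 2))⁻¹ *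
        ∫ φ in Set.univ.pi fun _ : Fin N × Fin N => Set.Icc (0 : ℝ) (2 * Real.pi),
          Matrix.trace (uniRho N φ ^ 3) =
      (5 * N ^ 2 - 6 * N + 2) / (N : ℂ) ^ 4 :=
  avg_third_moment_unimodular_general N
end

section
/- Fix an integer N ≥ 1. For real phases φ = (φ_{jk})_{1≤j,k≤N} and unit vectors ψ₁, ψ₂ ∈ ℂ^N define μ(φ,ψ₁,ψ₂) with entries μ_{α₁α₂} = Σ_{l=1}^{N} exp(i(φ_{α₁ l} − φ_{α₂ l})) · ψ₁(α₁) · conj(ψ₁(α₂)) · |ψ₂(l)|². Then the triple average of 1 − Tr(μ²) — over φ uniform on [0,2π]^{N²} with the product measure (dφ_{jk}/2π), and over ψ₁, ψ₂ taken as the first columns of two independent Haar-random unitaries in U(N) — equals ((N−1)/(N+1))². This is the mean entangling power of a random diagonal bipartite unitary gate. -/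
open Matrix MeasureTheory

/-- The reduced density matrix `μ(φ,ψ₁,ψ₂)` obtained by applying the diagonal unitary
with phases `exp(i φ_{αl})` to `ψ₁ ⊗ ψ₂` and tracing out the second factor:
`μ_{α₁α₂} = Σ_l exp(i(φ_{α₁l} − φ_{α₂l})) ψ₁(α₁) conj(ψ₁(α₂)) |ψ₂(l)|²`. -/
noncomputable def rdm (N : ℕ) (φ : Fin N × Fin N → ℝ) (ψ₁ ψ₂ : Fin N → ℂ) :
    Matrix (Fin N) (Fin N) ℂ :=
  Matrix.of fun α₁ α₂ => ∑ l,
    Complex.exp (Complex.I * ((φ (α₁, l) : ℂ) - (φ (α₂, l) : ℂ))) *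
      ψ₁ α₁ * (starRingEnd ℂ) (ψ₁ α₂) * (‖ψ₂ l‖ : ℂ) ^ 2

/-!
Expanding the trace, `1 − Tr μ² = Σ (1 − e^{iθ}) p_{α₁} p_{α₂} q_l q_{l'}`, where
`θ = φ_{α₁l} − φ_{α₂l} + φ_{α₂l'} − φ_{α₁l'}` and `p = |ψ₁|²`, `q = |ψ₂|²` are probability
vectors. The phase average of `1 − e^{iθ}` is the indicator of `α₁ ≠ α₂ ∧ l ≠ l'`, so the mean
is `m²` with `m = E Σ_{α ≠ β} |U_{αz}|² |U_{βz}|²`.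

By left invariance `⟪w, U e_z⟫` has the same law for every unit vector `w`. Taking `w = e_α`
and `w = (e_α + c e_β)/√2` with `c⁴ = 1`, the polarization identity for `‖u + c v‖⁴` gives
`E |U_{αz}|⁴ = 2 E |U_{αz}|² |U_{βz}|²` for `α ≠ β`. Together with `Σ_α |U_{αz}|² = 1`
this yields `m = (N − 1)/(N + 1)`.
-/

theorem Continuous.integrable_of_compactSpace {X E : Type*} [TopologicalSpace X] [CompactSpace X]
    [MeasurableSpace X] [OpensMeasurableSpace X] [NormedAddCommGroup E] {μ : Measure X}
    [IsFiniteMeasure μ] {f : X → E} (hf : Continuous f) : Integrable f μ :=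
  hf.integrable_of_hasCompactSupport (.of_compactSpace f)

theorem Complex.norm_pow_four_polarization (u v : ℂ) :
    ‖u + v‖ ^ 4 + ‖u - v‖ ^ 4 + ‖u + I * v‖ ^ 4 + ‖u - I * v‖ ^ 4 =
      4 * ‖u‖ ^ 4 + 4 * ‖v‖ ^ 4 + 16 * (‖u‖ ^ 2 * ‖v‖ ^ 2) := by
  simp only [show ∀ w : ℂ, ‖w‖ ^ 4 = (‖w‖ ^ 2) ^ 2 by intro; ring, Complex.sq_norm,
    Complex.normSq_apply, Complex.add_re, Complex.add_im, Complex.sub_re, Complex.sub_im,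
    Complex.mul_re, Complex.mul_im, Complex.I_re, Complex.I_im]
  ring

theorem integral_integral_sum_sum_mul_ofReal {X Y κ ι : Type*} [MeasurableSpace X]
    [MeasurableSpace Y] {μ : Measure X} {ν : Measure Y} [Fintype κ] [Fintype ι]
    (K : κ → ι → ℂ) {f : κ → X → ℝ} {g : ι → Y → ℝ} (hf : ∀ a, Integrable (f a) μ)
    (hg : ∀ b, Integrable (g b) ν) :
    ∫ x, ∫ y, ∑ a, ∑ b, K a b * f a x * g b y ∂ν ∂μ =
      ∑ a, ∑ b, K a b * (∫ x, f a x ∂μ : ℝ) * (∫ y, g b y ∂ν : ℝ) := by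
  have inner (x : X) : ∫ y, ∑ a, ∑ b, K a b * f a x * g b y ∂ν =
      ∑ a, ∑ b, K a b * (∫ y, g b y ∂ν : ℝ) * f a x := by
    rw [integral_finsetSum _ fun a _ =>
      integrable_finsetSum _ fun b _ => ((hg b).ofReal).const_mul _]
    refine Finset.sum_congr rfl fun a _ => ?_
    rw [integral_finsetSum _ fun b _ => ((hg b).ofReal).const_mul _]
    refine Finset.sum_congr rfl fun b _ => ?_
    rw [integral_const_mul, integral_complex_ofReal]
    ring
  simp_rw [inner]
  rw [integral_finsetSum _ fun a _ =>
    integrable_finsetSum _ fun b _ => ((hf a).ofReal).const_mul _]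
  refine Finset.sum_congr rfl fun a _ => ?_
  rw [integral_finsetSum _ fun b _ => ((hf a).ofReal).const_mul _]
  refine Finset.sum_congr rfl fun b _ => ?_
  rw [integral_const_mul, integral_complex_ofReal]
  ring

section UnitaryGroup

variable {n 𝕜 : Type*} [Fintype n] [DecidableEq n] [RCLike 𝕜]

instance Matrix.unitaryGroup.instCompactSpace : CompactSpace (unitaryGroup n 𝕜) := by
  have hK : IsCompact (Set.univ.pi fun _ : n => Set.univ.pi fun _ : n =>
      Metric.closedBall (0 : 𝕜) 1) :=
    isCompact_univ_pi fun _ => isCompact_univ_pi fun _ => isCompact_closedBall 0 1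
  refine isCompact_iff_compactSpace.mp <| hK.of_isClosed_subset
    (isClosed_unitary (R := Matrix n n 𝕜)) fun U hU i _ j _ => ?_
  simpa using entry_norm_bound_of_unitary hU i j

@[fun_prop]
theorem Matrix.unitaryGroup.continuous_entry (i j : n) :
    Continuous fun U : unitaryGroup n 𝕜 => (U : Matrix n n 𝕜) i j :=
  (continuous_apply j).comp ((continuous_apply i).comp continuous_subtype_val)

theorem Matrix.exists_mem_unitaryGroup_col_eq (w : EuclideanSpace 𝕜 n) (hw : ‖w‖ = 1) (x : n) :
    ∃ W ∈ unitaryGroup n 𝕜, ∀ k, W k x = w k := by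
  have hx : Orthonormal 𝕜 (({x} : Set n).domRestrict fun _ => w) := by
    rw [orthonormal_subsingleton_iff]
    exact fun _ => hw
  obtain ⟨b, hb⟩ := hx.exists_orthonormalBasis_extension_of_card_eq (by simp)
  refine ⟨(EuclideanSpace.basisFun n 𝕜).toBasis.toMatrix b,
    (EuclideanSpace.basisFun n 𝕜).toMatrix_orthonormalBasis_mem_unitary b, fun k => ?_⟩
  simp [Module.Basis.toMatrix_apply, hb x rfl]

theorem Matrix.sum_norm_sq_col_of_mem_unitaryGroup {U : Matrix n n ℂ}
    (hU : U ∈ unitaryGroup n ℂ) (z : n) : ∑ k, ‖U k z‖ ^ 2 = 1 := by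
  have h := congr_fun₂ (mem_unitaryGroup_iff'.mp hU) z z
  simp only [mul_apply, star_apply, one_apply_eq, Complex.star_def, Complex.conj_mul'] at h
  exact_mod_cast h

end UnitaryGroup

section ColumnMoments

variable {n : Type*} [Fintype n]

noncomputable def pairWeight (ψ : n → ℂ) (a : n × n) : ℝ := ‖ψ a.1‖ ^ 2 * ‖ψ a.2‖ ^ 2

theorem sum_pairWeight (ψ : n → ℂ) : ∑ a, pairWeight ψ a = (∑ k, ‖ψ k‖ ^ 2) ^ 2 := by
  rw [sq, Finset.sum_mul_sum, ← Finset.univ_product_univ, Finset.sum_product]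
  rfl

variable [DecidableEq n] [MeasurableSpace (unitaryGroup n ℂ)] [BorelSpace (unitaryGroup n ℂ)]
  (μ : Measure (unitaryGroup n ℂ))

noncomputable def colMoment (z : n) (a : n × n) : ℝ :=
  ∫ U, pairWeight (fun k => (U : Matrix n n ℂ) k z) a ∂μ

theorem integrable_pairWeight_col [IsFiniteMeasure μ] (z : n) (a : n × n) :
    Integrable (fun U : unitaryGroup n ℂ => pairWeight (fun k => (U : Matrix n n ℂ) k z) a) μ :=
  Continuous.integrable_of_compactSpace (by unfold pairWeight; fun_prop)

theorem sum_colMoment [IsProbabilityMeasure μ] (z : n) : ∑ a, colMoment μ z a = 1 := by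
  simp only [colMoment]
  rw [← integral_finsetSum _ fun a _ => integrable_pairWeight_col μ z a]
  simp [sum_pairWeight, sum_norm_sq_col_of_mem_unitaryGroup]

variable [μ.IsMulLeftInvariant]

theorem integral_comp_inner_col_eq {E : Type*} [NormedAddCommGroup E] [NormedSpace ℝ E]
    (g : ℂ → E) (w : EuclideanSpace ℂ n) (hw : ‖w‖ = 1) (x z : n) :
    ∫ U, g (inner ℂ w (WithLp.toLp 2 fun k => (U : Matrix n n ℂ) k z)) ∂μ =
      ∫ U, g ((U : Matrix n n ℂ) x z) ∂μ := by
  obtain ⟨W, hW, hWx⟩ := exists_mem_unitaryGroup_col_eq w hw x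
  rw [← integral_mul_left_eq_self (fun U : unitaryGroup n ℂ => g ((U : Matrix n n ℂ) x z))
    (star ⟨W, hW⟩)]
  congr 1 with U
  simp [mul_apply, hWx, PiLp.inner_apply, star_apply, mul_comm]

theorem integral_norm_entry_pow_four (α z : n) :
    ∫ U, ‖(U : Matrix n n ℂ) α z‖ ^ 4 ∂μ = colMoment μ z (z, z) := by
  have h := integral_comp_inner_col_eq μ (‖·‖ ^ 4) (EuclideanSpace.single α 1) (by simp) z z
  simp only [EuclideanSpace.inner_single_left, map_one, one_mul] at h
  rw [h, colMoment]
  simp only [pairWeight]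
  congr 1 with U
  ring

theorem integral_norm_add_mul_pow_four {α β : n} (hαβ : α ≠ β) (z : n) {c : ℂ} (hc : ‖c‖ = 1) :
    ∫ U, ‖(U : Matrix n n ℂ) α z + c * (U : Matrix n n ℂ) β z‖ ^ 4 ∂μ =
      4 * colMoment μ z (z, z) := by
  set v : EuclideanSpace ℂ n := EuclideanSpace.single α 1 + EuclideanSpace.single β (star c)
  have hv : ‖v‖ = √2 := by
    rw [← Real.sqrt_sq (norm_nonneg v), @norm_add_sq ℂ]
    simp [hc, EuclideanSpace.inner_single_left, hαβ.symm]
    norm_num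
  have hw : ‖(√2 : ℂ)⁻¹ • v‖ = 1 := by
    rw [norm_smul, hv, norm_inv, Complex.norm_real, Real.norm_of_nonneg (by positivity),
      inv_mul_cancel₀ (by positivity)]
  have h := integral_comp_inner_col_eq μ (‖·‖ ^ 4) _ hw z z
  have h4 : ‖(√2 : ℂ)⁻¹‖ ^ 4 = 4⁻¹ := by
    rw [norm_inv, Complex.norm_real, Real.norm_of_nonneg (by positivity), inv_pow,
      show 4 = 2 * 2 from rfl, pow_mul, Real.sq_sqrt zero_le_two]
    norm_num
  simp only [inner_smul_left, v, inner_add_left, EuclideanSpace.inner_single_left, map_inv₀,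
    Complex.conj_ofReal, map_one, one_mul, Complex.star_def, Complex.conj_conj, norm_mul,
    mul_pow, h4, integral_const_mul, integral_norm_entry_pow_four] at h
  linarith

theorem two_mul_colMoment_of_ne [IsFiniteMeasure μ] {α β : n} (hαβ : α ≠ β) (z : n) :
    2 * colMoment μ z (α, β) = colMoment μ z (z, z) := by
  have hI {f : unitaryGroup n ℂ → ℝ} (hf : Continuous f) : Integrable f μ :=
    hf.integrable_of_compactSpace
  have h₁ := integral_norm_add_mul_pow_four μ hαβ z (c := 1) (by simp)
  have h₂ := integral_norm_add_mul_pow_four μ hαβ z (c := -1) (by simp)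
  have h₃ := integral_norm_add_mul_pow_four μ hαβ z (c := Complex.I) (by simp)
  have h₄ := integral_norm_add_mul_pow_four μ hαβ z (c := -Complex.I) (by simp)
  simp only [one_mul, neg_mul, ← sub_eq_add_neg] at h₁ h₂ h₄
  have key := integral_congr_ae (μ := μ) (ae_of_all _ fun U : unitaryGroup n ℂ =>
    Complex.norm_pow_four_polarization ((U : Matrix n n ℂ) α z) ((U : Matrix n n ℂ) β z))
  rw [integral_add (hI (by fun_prop)) (hI (by fun_prop)),
    integral_add (hI (by fun_prop)) (hI (by fun_prop)),
    integral_add (hI (by fun_prop)) (hI (by fun_prop)), h₁, h₂, h₃, h₄,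
    integral_add (hI (by fun_prop)) (hI (by fun_prop)),
    integral_add (hI (by fun_prop)) (hI (by fun_prop)), integral_const_mul, integral_const_mul,
    integral_const_mul, integral_norm_entry_pow_four, integral_norm_entry_pow_four] at key
  rw [colMoment]
  simp only [pairWeight]
  linarith

theorem sum_offDiag_colMoment [IsProbabilityMeasure μ] (z : n) :
    ∑ a ∈ Finset.univ.offDiag, colMoment μ z a =
      ((Fintype.card n : ℝ) - 1) / ((Fintype.card n : ℝ) + 1) := by
  have hdiag : ∑ a ∈ Finset.univ.diag, colMoment μ z a =
      Fintype.card n * colMoment μ z (z, z) := by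
    rw [Finset.sum_congr rfl fun a ha => ?_, Finset.sum_const, Finset.diag_card, nsmul_eq_mul,
      Finset.card_univ]
    obtain ⟨-, ha⟩ := Finset.mem_diag.mp ha
    rw [← integral_norm_entry_pow_four μ a.1, colMoment]
    simp only [pairWeight, ← ha]
    congr 1 with U
    ring
  have hoff : ∑ a ∈ Finset.univ.offDiag, colMoment μ z a =
      (Fintype.card n * Fintype.card n - Fintype.card n : ℕ) * (colMoment μ z (z, z) / 2) := by
    rw [Finset.sum_congr rfl fun a ha => ?_, Finset.sum_const, Finset.offDiag_card, nsmul_eq_mul,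
      Finset.card_univ]
    rw [← two_mul_colMoment_of_ne μ (Finset.mem_offDiag.mp ha).2.2]
    ring
  have htotal := sum_colMoment μ z
  rw [← Finset.univ_product_univ, ← Finset.diag_union_offDiag,
    Finset.sum_union (Finset.disjoint_diag_offDiag _), hdiag, hoff] at htotal
  rw [hoff, eq_div_iff (by positivity)]
  rw [Nat.cast_sub (Nat.le_mul_self _), Nat.cast_mul] at htotal ⊢
  linear_combination ((Fintype.card n : ℝ) - 1) * htotal

end ColumnMoments

section PhaseAverage

variable {n : Type*}

/-- The phase `θ` of the term `a = (α₁, α₂)`, `b = (l, l')` of `Tr μ²`. -/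
def tracePhase (φ : n × n → ℝ) (a b : n × n) : ℝ :=
  φ (a.1, b.1) - φ (a.2, b.1) + φ (a.2, b.2) - φ (a.1, b.2)

def tracePhaseCoeff [DecidableEq n] (a b : n × n) : n × n → ℤ :=
  Pi.single (a.1, b.1) 1 - Pi.single (a.2, b.1) 1 + Pi.single (a.2, b.2) 1 -
    Pi.single (a.1, b.2) 1

theorem tracePhaseCoeff_eq_zero_iff [DecidableEq n] {a b : n × n} :
    tracePhaseCoeff a b = 0 ↔ a.1 = a.2 ∨ b.1 = b.2 := by
  constructor
  · intro h
    by_contra! hne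
    have := congr_fun h (a.1, b.1)
    simp [tracePhaseCoeff, hne.1, hne.2] at this
  · rintro (h | h) <;> simp [tracePhaseCoeff, h]

variable [Fintype n] [DecidableEq n]

theorem sum_tracePhaseCoeff_mul (φ : n × n → ℝ) (a b : n × n) :
    ∑ p, (tracePhaseCoeff a b p : ℝ) * φ p = tracePhase φ a b := by
  simp [tracePhaseCoeff, tracePhase, sub_mul, add_mul, Finset.sum_add_distrib,
    Finset.sum_sub_distrib, Pi.single_apply]

theorem setIntegral_Icc_exp_int_mul (k : ℤ) :
    ∫ t in Set.Icc 0 (2 * Real.pi), Complex.exp (Complex.I * ((k * t : ℝ) : ℂ)) =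
      if k = 0 then (2 * Real.pi : ℂ) else 0 := by
  rw [integral_Icc_eq_integral_Ioc, ← intervalIntegral.integral_of_le (by positivity)]
  split_ifs with hk
  · simp [hk]
  · have hk' : Complex.I * k ≠ 0 := by simp [hk]
    push_cast
    simp_rw [← mul_assoc]
    rw [integral_exp_mul_complex hk',
      show Complex.I * k * (2 * Real.pi : ℝ) = k * (2 * Real.pi * Complex.I) by push_cast; ring,
      Complex.exp_int_mul_two_pi_mul_I]
    simp

theorem setIntegral_cube_exp_sum_int_mul {ι : Type*} [Fintype ι] (c : ι → ℤ) :
    ∫ φ in Set.univ.pi fun _ : ι => Set.Icc 0 (2 * Real.pi),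
        Complex.exp (Complex.I * ((∑ p, c p * φ p : ℝ) : ℂ)) =
      if c = 0 then (2 * Real.pi : ℂ) ^ Fintype.card ι else 0 := by
  simp_rw [Complex.ofReal_sum, Finset.mul_sum, Complex.exp_sum]
  rw [volume_pi, Measure.restrict_pi_pi, integral_fintype_prod_eq_prod
    (f := fun p t => Complex.exp (Complex.I * ((c p * t : ℝ) : ℂ)))]
  simp only [setIntegral_Icc_exp_int_mul, Finset.prod_ite_zero, Finset.prod_const,
    Finset.mem_univ, true_implies, Finset.card_univ, funext_iff, Pi.zero_apply]

theorem setIntegral_cube_one_sub_exp_tracePhase (a b : n × n) :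
    ∫ φ in Set.univ.pi fun _ : n × n => Set.Icc 0 (2 * Real.pi),
        (1 - Complex.exp (Complex.I * tracePhase φ a b)) =
      if a.1 ≠ a.2 ∧ b.1 ≠ b.2 then (2 * Real.pi : ℂ) ^ (Fintype.card n ^ 2) else 0 := by
  have hK : IsCompact (Set.univ.pi fun _ : n × n => Set.Icc 0 (2 * Real.pi)) :=
    isCompact_univ_pi fun _ => isCompact_Icc
  have hvol : volume.real (Set.univ.pi fun _ : n × n => Set.Icc 0 (2 * Real.pi)) =
      (2 * Real.pi) ^ (Fintype.card n ^ 2) := by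
    rw [measureReal_def, volume_pi_pi]
    simp [Real.volume_Icc, sq, Real.pi_pos.le]
  have hone : IntegrableOn (fun _ => (1 : ℂ))
      (Set.univ.pi fun _ : n × n => Set.Icc 0 (2 * Real.pi)) :=
    integrableOn_const hK.measure_lt_top.ne
  rw [integral_sub hone
      ((Continuous.continuousOn (by unfold tracePhase; fun_prop)).integrableOn_compact hK),
    setIntegral_const, hvol]
  simp_rw [← sum_tracePhaseCoeff_mul, setIntegral_cube_exp_sum_int_mul,
    tracePhaseCoeff_eq_zero_iff]
  split_ifs <;> simp_all [sq]

theorem setIntegral_cube_sum_one_sub_exp_tracePhase_mul (K : n × n → n × n → ℂ) :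
    ∫ φ in Set.univ.pi fun _ : n × n => Set.Icc 0 (2 * Real.pi),
        ∑ a, ∑ b, (1 - Complex.exp (Complex.I * tracePhase φ a b)) * K a b =
      (2 * Real.pi : ℂ) ^ (Fintype.card n ^ 2) *
        ∑ a ∈ Finset.univ.offDiag, ∑ b ∈ Finset.univ.offDiag, K a b := by
  have hint (a b : n × n) :
      IntegrableOn (fun φ => (1 - Complex.exp (Complex.I * tracePhase φ a b)) * K a b)
        (Set.univ.pi fun _ : n × n => Set.Icc 0 (2 * Real.pi)) :=
    (Continuous.continuousOn (by unfold tracePhase; fun_prop)).integrableOn_compact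
      (isCompact_univ_pi fun _ => isCompact_Icc)
  rw [integral_finsetSum _ fun a _ => integrable_finsetSum _ fun b _ => hint a b,
    Finset.sum_congr rfl fun a _ => integral_finsetSum _ fun b _ => hint a b]
  simp only [integral_mul_const, setIntegral_cube_one_sub_exp_tracePhase]
  rw [show Finset.univ.offDiag = Finset.univ.filter (fun a : n × n => a.1 ≠ a.2) by ext; simp]
  simp only [Finset.sum_filter, Finset.mul_sum, ite_and, ite_mul, zero_mul, mul_ite, mul_zero,
    Finset.sum_ite_irrel, Finset.sum_const_zero]

end PhaseAverage

section ReducedDensityMatrix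

variable {N : ℕ}

theorem trace_rdm_mul_self (φ : Fin N × Fin N → ℝ) (ψ₁ ψ₂ : Fin N → ℂ) :
    trace (rdm N φ ψ₁ ψ₂ * rdm N φ ψ₁ ψ₂) =
      ∑ a, ∑ b, Complex.exp (Complex.I * tracePhase φ a b) * pairWeight ψ₁ a *
        pairWeight ψ₂ b := by
  simp only [trace, diag_apply, mul_apply, rdm, of_apply, Finset.sum_mul_sum,
    Fintype.sum_prod_type]
  refine Finset.sum_congr rfl fun α₁ _ => Finset.sum_congr rfl fun α₂ _ =>
    Finset.sum_congr rfl fun l _ => Finset.sum_congr rfl fun l' _ => ?_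
  set e₁ := Complex.exp (Complex.I * (φ (α₁, l) - φ (α₂, l)))
  set e₂ := Complex.exp (Complex.I * (φ (α₂, l') - φ (α₁, l')))
  have hexp : Complex.exp (Complex.I * tracePhase φ (α₁, α₂) (l, l')) = e₁ * e₂ := by
    rw [← Complex.exp_add, tracePhase]
    push_cast
    ring_nf
  have hconj := congrArg₂ (· * ·) (Complex.mul_conj' (ψ₁ α₁)) (Complex.mul_conj' (ψ₁ α₂))
  rw [hexp, pairWeight, pairWeight]
  push_cast
  linear_combination e₁ * e₂ * (‖ψ₂ l‖ : ℂ) ^ 2 * (‖ψ₂ l'‖ : ℂ) ^ 2 * hconj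

theorem one_sub_trace_rdm_mul_self (φ : Fin N × Fin N → ℝ) {ψ₁ ψ₂ : Fin N → ℂ}
    (h₁ : ∑ k, ‖ψ₁ k‖ ^ 2 = 1) (h₂ : ∑ k, ‖ψ₂ k‖ ^ 2 = 1) :
    1 - trace (rdm N φ ψ₁ ψ₂ * rdm N φ ψ₁ ψ₂) =
      ∑ a, ∑ b, (1 - Complex.exp (Complex.I * tracePhase φ a b)) * pairWeight ψ₁ a *
        pairWeight ψ₂ b := by
  have hone : ∑ a, ∑ b, (pairWeight ψ₁ a : ℂ) * pairWeight ψ₂ b = 1 := by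
    rw [← Finset.sum_mul_sum]
    exact_mod_cast by rw [sum_pairWeight, sum_pairWeight, h₁, h₂]; norm_num
  simp only [trace_rdm_mul_self, sub_mul, one_mul, Finset.sum_sub_distrib, hone]

theorem integral_integral_one_sub_trace_rdm_mul_self
    [MeasurableSpace (unitaryGroup (Fin N) ℂ)] [BorelSpace (unitaryGroup (Fin N) ℂ)]
    (μ : Measure (unitaryGroup (Fin N) ℂ)) [IsFiniteMeasure μ] (φ : Fin N × Fin N → ℝ)
    (z : Fin N) :
    ∫ U₁, ∫ U₂,
        (1 - trace
          (rdm N φ (fun α => (U₁ : Matrix (Fin N) (Fin N) ℂ) α z)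
              (fun l => (U₂ : Matrix (Fin N) (Fin N) ℂ) l z) *
            rdm N φ (fun α => (U₁ : Matrix (Fin N) (Fin N) ℂ) α z)
              (fun l => (U₂ : Matrix (Fin N) (Fin N) ℂ) l z))) ∂μ ∂μ =
      ∑ a, ∑ b, (1 - Complex.exp (Complex.I * tracePhase φ a b)) *
        (colMoment μ z a * colMoment μ z b) := by
  unfold colMoment
  simp_rw [← mul_assoc]
  rw [← integral_integral_sum_sum_mul_ofReal _ (integrable_pairWeight_col μ z)
    (integrable_pairWeight_col μ z)]
  refine integral_congr_ae (ae_of_all _ fun U₁ => integral_congr_ae (ae_of_all _ fun U₂ => ?_))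
  exact one_sub_trace_rdm_mul_self φ (sum_norm_sq_col_of_mem_unitaryGroup U₁.2 z)
    (sum_norm_sq_col_of_mem_unitaryGroup U₂.2 z)

end ReducedDensityMatrix

/-- the mean entangling power of a random diagonal bipartite gate:
the average of `1 − Tr(μ²)` over uniform phases `φ` and over `ψ₁, ψ₂` — first columns
of two independent Haar-random unitaries — equals `((N−1)/(N+1))²`. -/
theorem mean_entangling_power_diagonal (N : ℕ) (hN : 0 < N)
    [MeasurableSpace (Matrix.unitaryGroup (Fin N) ℂ)]
    [BorelSpace (Matrix.unitaryGroup (Fin N) ℂ)]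
    (μ : Measure (Matrix.unitaryGroup (Fin N) ℂ))
    [IsProbabilityMeasure μ] [μ.IsMulLeftInvariant] :
    ((2 * Real.pi : ℂ) ^ (N ^ 2))⁻¹ *
        ∫ φ in Set.univ.pi fun _ : Fin N × Fin N => Set.Icc (0 : ℝ) (2 * Real.pi),
          ∫ U₁, ∫ U₂,
            (1 - Matrix.trace
              (rdm N φ (fun α => (U₁ : Matrix (Fin N) (Fin N) ℂ) α ⟨0, hN⟩)
                  (fun l => (U₂ : Matrix (Fin N) (Fin N) ℂ) l ⟨0, hN⟩) *
                rdm N φ (fun α => (U₁ : Matrix (Fin N) (Fin N) ℂ) α ⟨0, hN⟩)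
                  (fun l => (U₂ : Matrix (Fin N) (Fin N) ℂ) l ⟨0, hN⟩))) ∂μ ∂μ =
      (((N : ℂ) - 1) / ((N : ℂ) + 1)) ^ 2 := by
  simp_rw [integral_integral_one_sub_trace_rdm_mul_self]
  rw [setIntegral_cube_sum_one_sub_exp_tracePhase_mul, Fintype.card_fin, ← mul_assoc,
    inv_mul_cancel₀ (pow_ne_zero _ (mul_ne_zero two_ne_zero (mod_cast Real.pi_ne_zero))),
    one_mul, ← Finset.sum_mul_sum]
  simp only [← Complex.ofReal_sum, sum_offDiag_colMoment, Fintype.card_fin]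
  push_cast
  ring
end
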